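/- If two words u and v over {a,b,a⁻¹,b⁻¹} represent the same element of the Baumslag-Solitar group BS(m,n) = ⟨a,b | aᵐb = baⁿ⟩, then ψ(u) = ψ(v) and ‖u‖_{b⁻¹} = ‖v‖_{b⁻¹}; hence the map Φ(g) = (ψ(w), ‖w‖_{b⁻¹}) for any word w representing g is a well-defined function on BS(m,n). -/

import Mathlib

inductive Letter : Type
  | a | b | ainv | binv
deriving DecidableEq

def bExp (w : List Letter) : ℤ := (w.count Letter.b : ℤ) - (w.count Letter.binv : ℤ)

/-- ‖w‖_{b⁻¹} = |w|_{b⁻¹} − |w|_b. -/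
def binvExp (w : List Letter) : ℤ := (w.count Letter.binv : ℤ) - (w.count Letter.b : ℤ)

noncomputable def psiAux (m n : ℕ) : List Letter → ℝ
  | [] => 0
  | x :: w =>
    match x with
    | Letter.a    => psiAux m n w + ((m : ℝ) / n) ^ (bExp w.reverse)
    | Letter.ainv => psiAux m n w - ((m : ℝ) / n) ^ (bExp w.reverse)
    | _           => psiAux m n w

noncomputable def psi (m n : ℕ) (w : List Letter) : ℝ := psiAux m n w.reverse

inductive Gen : Type
  | a | b
deriving DecidableEq

/-- The Baumslag–Solitar group BS(m,n) = ⟨a, b | aᵐ b = b aⁿ⟩. -/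
abbrev BS (m n : ℕ) : Type :=
  PresentedGroup
    ({FreeGroup.of Gen.a ^ m * FreeGroup.of Gen.b * (FreeGroup.of Gen.a ^ n)⁻¹ *
        (FreeGroup.of Gen.b)⁻¹} : Set (FreeGroup Gen))

/-- Interpretation of a letter in BS(m,n). -/
def Letter.toBS (m n : ℕ) : Letter → BS m n
  | Letter.a    => PresentedGroup.of Gen.a
  | Letter.b    => PresentedGroup.of Gen.b
  | Letter.ainv => (PresentedGroup.of Gen.a)⁻¹
  | Letter.binv => (PresentedGroup.of Gen.b)⁻¹

/-- The element of BS(m,n) represented by a word. -/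
def wordToBS (m n : ℕ) (w : List Letter) : BS m n := (w.map (Letter.toBS m n)).prod

/-! The letters `a` and `b` act on `ℝ` by `t ↦ t + 1` and `t ↦ (m/n) t`; both sides of the relation
`aᵐ b = b aⁿ` then act as `t ↦ (m/n) t + m`. A word `w` acts as `t ↦ ψ(w) + (m/n)^‖w‖_b t`, so `ψ`
is read off the action at `0`. The exponent sum of `b` needs a separate
homomorphism to `ℤ`, since the action forgets it when `m = n`. -/

open Equiv Multiplicative

theorem bExp_append (u v : List Letter) : bExp (u ++ v) = bExp u + bExp v := by
  simp only [bExp, List.count_append]; push_cast; ring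

theorem binvExp_eq_neg_bExp (w : List Letter) : binvExp w = -bExp w := by
  simp only [binvExp, bExp]; ring

section

variable (m n : ℕ)

theorem psi_append_singleton (w : List Letter) (x : Letter) :
    psi m n (w ++ [x]) = psiAux m n (x :: w.reverse) := by
  simp [psi]

theorem wordToBS_append_singleton (w : List Letter) (x : Letter) :
    wordToBS m n (w ++ [x]) = wordToBS m n w * x.toBS m n := by
  simp [wordToBS]

def Gen.bDegree : Gen → Multiplicative ℤ
  | .a => 1
  | .b => ofAdd 1

def bExpHom : BS m n →* Multiplicative ℤ :=
  PresentedGroup.toGroup (f := Gen.bDegree) <| by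
    rintro _ rfl
    simp [Gen.bDegree]

theorem bExpHom_wordToBS (w : List Letter) : bExpHom m n (wordToBS m n w) = ofAdd (bExp w) := by
  induction w using List.reverseRecOn with
  | nil => simp [wordToBS, bExp]
  | append_singleton w x ih =>
    rw [wordToBS_append_singleton, map_mul, ih, bExp_append]
    cases x <;> simp [Letter.toBS, bExpHom, PresentedGroup.toGroup.of, Gen.bDegree, bExp]

variable {m n} (hm : 0 < m) (hn : 0 < n)

noncomputable def affineGen : Gen → Perm ℝ
  | .a => Equiv.addRight 1
  | .b => Equiv.mulLeft₀ ((m : ℝ) / n) (by positivity)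

noncomputable def affineHom : BS m n →* Perm ℝ :=
  PresentedGroup.toGroup (f := affineGen hm hn) <| by
    rintro _ rfl
    ext t
    simp [affineGen]
    field_simp
    ring

theorem affineHom_of (g : Gen) : affineHom hm hn (PresentedGroup.of g) = affineGen hm hn g :=
  PresentedGroup.toGroup.of _

theorem affineHom_wordToBS_apply (w : List Letter) (t : ℝ) :
    affineHom hm hn (wordToBS m n w) t = psi m n w + ((m : ℝ) / n) ^ bExp w * t := by
  have hr : ((m : ℝ) / n) ≠ 0 := by positivity
  induction w using List.reverseRecOn generalizing t with
  | nil => simp [wordToBS, bExp, psi, psiAux]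
  | append_singleton w x ih =>
    rw [wordToBS_append_singleton, map_mul, Perm.mul_apply, psi_append_singleton, bExp_append]
    cases x <;> simp [Letter.toBS, affineHom_of, affineGen, ih, psi, psiAux, bExp, zpow_add₀ hr]
    all_goals ring

end

theorem phi_well_defined (m n : ℕ) (hm : 0 < m) (hn : 0 < n) (u v : List Letter)
    (h : wordToBS m n u = wordToBS m n v) :
    psi m n u = psi m n v ∧ binvExp u = binvExp v := by
  have hpsi : psi m n u = psi m n v := by
    simpa [affineHom_wordToBS_apply] using congrArg (fun g => affineHom hm hn g 0) h
  have hb : bExp u = bExp v := by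
    simpa [bExpHom_wordToBS] using congrArg (bExpHom m n) h
  exact ⟨hpsi, by rw [binvExp_eq_neg_bExp, binvExp_eq_neg_bExp, hb]⟩
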